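/- arXiv:math/0604331 — 2 statements merged into one kernel-verified Lean document; each statement's English description precedes it below -/
import Mathlib

section
/- If β(a,b) and β(c, a+b-c) denote Beta-distributed random variables and the variables on the left are independent, then β(a,b)·β(c,a-c) has the same distribution as β(c, a+b-c), for parameters 0 < c < a and b > 0. -/
/-
By independence the law of `X * Y` is the multiplicative convolution of the two laws, which for
laws with densities `f`, `g` has the Mellin density `z ↦ ∫ f x g (z / x) |x|⁻¹ dx`. For the two
Beta densities this integrand lives on `z < x < 1`, where up to constants it is
`z^(c-1) (x - z)^(a-c-1) (1 - x)^(b-1)`; the substitution `x = z + (1 - z) t` turns its integral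
into `z^(c-1) (1 - z)^(a+b-c-1) B(a-c, b)`. The constants match because
`B(c, a-c) B(a, b) = B(a-c, b) B(c, a+b-c)`, both sides being `Γ(c) Γ(a-c) Γ(b) / Γ(a+b)`.
-/

open MeasureTheory ProbabilityTheory Real Set

/-- The Beta distribution with parameters `a`, `b`, given by its density
`Γ(a+b)/(Γ(a)Γ(b)) x^(a-1) (1-x)^(b-1)` on `(0,1)`. -/
noncomputable def betaMeasure (a b : ℝ) : Measure ℝ :=
  (volume.restrict (Set.Ioo (0 : ℝ) 1)).withDensity
    (fun x => ENNReal.ofReal (Real.Gamma (a + b) / (Real.Gamma a * Real.Gamma b)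
      * x ^ (a - 1) * (1 - x) ^ (b - 1)))

open scoped ENNReal

theorem Real.lintegral_comp_mul_left (g : ℝ → ℝ≥0∞) {a : ℝ} (ha : a ≠ 0) :
    ∫⁻ y, g (a * y) = ENNReal.ofReal |a⁻¹| * ∫⁻ z, g z := by
  rw [← smul_eq_mul, ← lintegral_smul_measure, ← Real.map_volume_mul_left ha]
  exact (lintegral_map_equiv g (Homeomorph.mulLeft₀ a ha).toMeasurableEquiv).symm

noncomputable def mellinConvolution (f g : ℝ → ℝ≥0∞) (z : ℝ) : ℝ≥0∞ :=
  ∫⁻ x, f x * g (z / x) * ENNReal.ofReal |x⁻¹|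

theorem measurable_mellinConvolution {f g : ℝ → ℝ≥0∞} (hf : Measurable f) (hg : Measurable g) :
    Measurable (mellinConvolution f g) :=
  Measurable.lintegral_prod_left'
    (f := fun p : ℝ × ℝ => f p.1 * g (p.2 / p.1) * ENNReal.ofReal |p.1⁻¹|) (by fun_prop)

theorem mconv_withDensity_eq_withDensity_mellinConvolution {f g : ℝ → ℝ≥0∞}
    (hf : Measurable f) (hg : Measurable g) :
    volume.withDensity f ∗ₘ volume.withDensity g =
      volume.withDensity (mellinConvolution f g) := by
  refine Measure.ext_of_lintegral _ fun φ hφ => ?_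
  have scale : ∀ x ≠ 0, ∫⁻ y, g y * φ (x * y) =
      ENNReal.ofReal |x⁻¹| * ∫⁻ z, g (z / x) * φ z := fun x hx => by
    rw [← Real.lintegral_comp_mul_left _ hx]
    simp_rw [mul_div_cancel_left₀ _ hx]
  calc ∫⁻ z, φ z ∂(volume.withDensity f ∗ₘ volume.withDensity g)
      = ∫⁻ x, f x * ∫⁻ y, g y * φ (x * y) := by
        rw [Measure.lintegral_mconv hφ, lintegral_withDensity_eq_lintegral_mul _ hf
          (Measurable.lintegral_prod_right'
            (f := fun p : ℝ × ℝ => φ (p.1 * p.2)) (by fun_prop))]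
        congr 1 with x
        rw [Pi.mul_apply, lintegral_withDensity_eq_lintegral_mul _ hg (by fun_prop)]
        rfl
    _ = ∫⁻ x, ∫⁻ z, f x * g (z / x) * ENNReal.ofReal |x⁻¹| * φ z := by
        refine lintegral_congr_ae ((Measure.ae_ne volume 0).mono fun x hx => ?_)
        dsimp only
        rw [scale x hx, ← lintegral_const_mul _ (by fun_prop),
          ← lintegral_const_mul _ (by fun_prop)]
        congr 1 with z
        ring
    _ = ∫⁻ z, mellinConvolution f g z * φ z := by
        rw [lintegral_lintegral_swap (by fun_prop)]
        congr 1 with z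
        exact lintegral_mul_const _ (by fun_prop)
    _ = _ :=
        (lintegral_withDensity_eq_lintegral_mul _ (measurable_mellinConvolution hf hg) hφ).symm

theorem mem_Ioo_of_betaPDF_ne_zero {a b x : ℝ} (h : betaPDF a b x ≠ 0) : x ∈ Ioo 0 1 :=
  ⟨not_le.1 fun hx => h (betaPDF_eq_zero_of_nonpos hx),
    not_le.1 fun hx => h (betaPDF_eq_zero_of_one_le hx)⟩

theorem betaMeasure_eq_withDensity_betaPDF (a b : ℝ) :
    _root_.betaMeasure a b = volume.withDensity (betaPDF a b) := by
  rw [_root_.betaMeasure, ← withDensity_indicator measurableSet_Ioo]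
  congr 1 with x
  by_cases hx : x ∈ Ioo 0 1
  · rw [indicator_of_mem hx, betaPDF_of_pos_lt_one hx.1 hx.2, beta, one_div_div]
  · rw [indicator_of_notMem hx, not_imp_comm.1 mem_Ioo_of_betaPDF_ne_zero hx]

theorem lintegral_rpow_mul_one_sub_rpow {p q : ℝ} (hp : 0 < p) (hq : 0 < q) :
    ∫⁻ x in Ioo 0 1, ENNReal.ofReal (x ^ (p - 1) * (1 - x) ^ (q - 1)) =
      ENNReal.ofReal (beta p q) := by
  have hB := beta_pos hp hq
  have h := lintegral_betaPDF_eq_one hp hq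
  simp_rw [lintegral_betaPDF, mul_assoc, ENNReal.ofReal_mul (one_div_pos.2 hB).le] at h
  rw [lintegral_const_mul _ (by fun_prop), mul_comm] at h
  rw [ENNReal.eq_inv_of_mul_eq_one_left h, one_div, ENNReal.ofReal_inv_of_pos hB, inv_inv]

theorem lintegral_Ioo_sub_rpow_mul_one_sub_rpow {p q z : ℝ} (hp : 0 < p) (hq : 0 < q)
    (hz : z < 1) :
    ∫⁻ x in Ioo z 1, ENNReal.ofReal ((x - z) ^ (p - 1) * (1 - x) ^ (q - 1)) =
      ENNReal.ofReal ((1 - z) ^ (p + q - 1) * beta p q) := by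
  have hz' : 0 < 1 - z := sub_pos.2 hz
  have himage : (fun t => (1 - z) * t + z) '' Ioo 0 1 = Ioo z 1 := by
    rw [image_affine_Ioo hz']
    congr 1 <;> ring
  rw [← himage, lintegral_image_eq_lintegral_abs_deriv_mul measurableSet_Ioo
      (fun t _ => (((hasDerivAt_id' t).const_mul (1 - z)).add_const z).hasDerivWithinAt)
      (fun s _ t _ h => by simpa [hz'.ne'] using h)]
  have hintegrand : ∀ t ∈ Ioo (0 : ℝ) 1,
      ENNReal.ofReal |(1 - z) * 1| *
        ENNReal.ofReal (((1 - z) * t + z - z) ^ (p - 1) * (1 - ((1 - z) * t + z)) ^ (q - 1)) =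
      ENNReal.ofReal ((1 - z) ^ (p + q - 1)) *
        ENNReal.ofReal (t ^ (p - 1) * (1 - t) ^ (q - 1)) := fun t ht => by
    have h1t : 0 ≤ 1 - t := by linarith [ht.2]
    rw [← ENNReal.ofReal_mul (abs_nonneg _), ← ENNReal.ofReal_mul (by positivity)]
    congr 1
    rw [show (1 - z) * t + z - z = (1 - z) * t by ring,
      show 1 - ((1 - z) * t + z) = (1 - z) * (1 - t) by ring,
      mul_one, abs_of_pos hz', mul_rpow hz'.le ht.1.le, mul_rpow hz'.le h1t,
      show p + q - 1 = 1 + (p - 1) + (q - 1) by ring, rpow_add hz', rpow_add hz', rpow_one]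
    ring
  rw [setLIntegral_congr_fun measurableSet_Ioo hintegrand, lintegral_const_mul _ (by fun_prop),
    lintegral_rpow_mul_one_sub_rpow hp hq, ← ENNReal.ofReal_mul (by positivity)]

theorem beta_mul_beta_add {x y w : ℝ} (hxy : 0 < x + y) (hyw : 0 < y + w) :
    beta x y * beta (x + y) w = beta y w * beta x (y + w) := by
  have := (Gamma_pos_of_pos hxy).ne'
  have := (Gamma_pos_of_pos hyw).ne'
  simp only [beta, add_assoc]
  field_simp

theorem mem_Ioo_of_betaPDF_mul_betaPDF_div_ne_zero {a b c d x z : ℝ}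
    (h : betaPDF a b x * betaPDF c d (z / x) ≠ 0) : z ∈ Ioo 0 1 ∧ x ∈ Ioo z 1 := by
  obtain ⟨hx, hzx⟩ := mul_ne_zero_iff.1 h
  obtain ⟨hx0, hx1⟩ := mem_Ioo_of_betaPDF_ne_zero hx
  obtain ⟨hzx0, hzx1⟩ := mem_Ioo_of_betaPDF_ne_zero hzx
  have hz0 : 0 < z := (div_pos_iff_of_pos_right hx0).1 hzx0
  have hzx : z < x := (div_lt_one hx0).1 hzx1
  exact ⟨⟨hz0, hzx.trans hx1⟩, hzx, hx1⟩

theorem betaPDF_mul_betaPDF_div_mul_abs_inv {a b c z : ℝ} (hc : 0 < c) (hca : c < a)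
    (hb : 0 < b) (hz : z ∈ Ioo 0 1) (x : ℝ) :
    betaPDF a b x * betaPDF c (a - c) (z / x) * ENNReal.ofReal |x⁻¹| =
      (Ioo z 1).indicator (fun x =>
        ENNReal.ofReal ((beta a b)⁻¹ * (beta c (a - c))⁻¹ * z ^ (c - 1)) *
          ENNReal.ofReal ((x - z) ^ (a - c - 1) * (1 - x) ^ (b - 1))) x := by
  by_cases hx : x ∉ Ioo z 1
  · rw [indicator_of_notMem hx, mul_eq_zero_of_left]
    exact not_imp_comm.1 mem_Ioo_of_betaPDF_mul_betaPDF_div_ne_zero fun h => hx h.2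
  rw [not_not] at hx
  have hB₁ := beta_pos (hc.trans hca) hb
  have hB₂ := beta_pos hc (sub_pos.2 hca)
  have hz0 := hz.1
  have hx0 : 0 < x := hz0.trans hx.1
  have hxz : 0 ≤ x - z := sub_nonneg.2 hx.1.le
  have hx1 : 0 ≤ 1 - x := sub_nonneg.2 hx.2.le
  have hzx : z / x ∈ Ioo 0 1 := ⟨div_pos hz0 hx0, (div_lt_one hx0).2 hx.1⟩
  have hzx1 : 0 ≤ 1 - z / x := sub_nonneg.2 hzx.2.le
  have hxpow : x ^ (a - 1) = x * x ^ (c - 1) * x ^ (a - c - 1) := by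
    rw [← rpow_one_add' hx0.le (by linarith), ← rpow_add hx0]
    ring_nf
  rw [indicator_of_mem hx, betaPDF_of_pos_lt_one hx0 hx.2, betaPDF_of_pos_lt_one hzx.1 hzx.2,
    ← ENNReal.ofReal_mul (by positivity), ← ENNReal.ofReal_mul (by positivity),
    ← ENNReal.ofReal_mul (by positivity)]
  congr 1
  rw [abs_of_pos (inv_pos.2 hx0), div_rpow hz0.le hx0.le, one_sub_div hx0.ne',
    div_rpow hxz hx0.le, hxpow]
  have := (rpow_pos_of_pos hx0 (c - 1)).ne'
  have := (rpow_pos_of_pos hx0 (a - c - 1)).ne'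
  field_simp

theorem mellinConvolution_betaPDF {a b c : ℝ} (hc : 0 < c) (hca : c < a) (hb : 0 < b) :
    mellinConvolution (betaPDF a b) (betaPDF c (a - c)) = betaPDF c (a + b - c) := by
  funext z
  by_cases hz : z ∉ Ioo 0 1
  · rw [not_imp_comm.1 mem_Ioo_of_betaPDF_ne_zero hz, mellinConvolution, ← lintegral_zero]
    exact lintegral_congr fun x => mul_eq_zero_of_left
      (not_imp_comm.1 mem_Ioo_of_betaPDF_mul_betaPDF_div_ne_zero fun h => hz h.1) _
  rw [not_not] at hz
  have hz0 := hz.1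
  have hB₁ := beta_pos (hc.trans hca) hb
  have hB₂ := beta_pos hc (sub_pos.2 hca)
  have hB₃ := beta_pos hc (show 0 < a + b - c by linarith)
  have hB := beta_mul_beta_add (x := c) (y := a - c) (w := b) (by linarith) (by linarith)
  rw [show c + (a - c) = a by ring, show a - c + b = a + b - c by ring] at hB
  rw [mellinConvolution,
    lintegral_congr (betaPDF_mul_betaPDF_div_mul_abs_inv hc hca hb hz),
    lintegral_indicator measurableSet_Ioo, lintegral_const_mul _ (by fun_prop),
    lintegral_Ioo_sub_rpow_mul_one_sub_rpow (sub_pos.2 hca) hb hz.2,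
    ← ENNReal.ofReal_mul (by positivity), betaPDF_of_pos_lt_one hz.1 hz.2,
    show a - c + b - 1 = a + b - c - 1 by ring, (eq_div_iff_mul_eq hB₃.ne').2 hB.symm]
  congr 1
  field_simp

theorem beta_mul_beta {Ω : Type*} [MeasurableSpace Ω] (μ : Measure Ω)
    [IsProbabilityMeasure μ] (a b c : ℝ) (hc : 0 < c) (hca : c < a) (hb : 0 < b)
    (X Y : Ω → ℝ) (hX : Measurable X) (hY : Measurable Y)
    (hXlaw : μ.map X = _root_.betaMeasure a b) (hYlaw : μ.map Y = _root_.betaMeasure c (a - c))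
    (hindep : IndepFun X Y μ) :
    μ.map (fun ω => X ω * Y ω) = _root_.betaMeasure c (a + b - c) := by
  calc μ.map (X * Y) = μ.map X ∗ₘ μ.map Y := hindep.map_mul_eq_map_mconv_map hX hY
    _ = volume.withDensity (betaPDF a b) ∗ₘ volume.withDensity (betaPDF c (a - c)) := by
      rw [hXlaw, hYlaw, betaMeasure_eq_withDensity_betaPDF, betaMeasure_eq_withDensity_betaPDF]
    _ = volume.withDensity (mellinConvolution (betaPDF a b) (betaPDF c (a - c))) :=
      mconv_withDensity_eq_withDensity_mellinConvolution
        (measurable_betaPDFReal _ _).ennreal_ofReal (measurable_betaPDFReal _ _).ennreal_ofReal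
    _ = _root_.betaMeasure c (a + b - c) := by
      rw [mellinConvolution_betaPDF hc hca hb, betaMeasure_eq_withDensity_betaPDF]
end

section
/- Let η_k and η_{k+1} be independent Gamma random variables with parameters k/2 and (k+1)/2 respectively, and set R_k = η_k/η_{k+1}. Then for every k ≥ 1 and every ρ ∈ [0,1], P(R_k > 1 + ρ) ≤ (1 - ρ²/(2+ρ)²)^{k/2}. -/
/-!
Chernoff's bound: for `θ ≥ 0`, the event `(1 + ρ) η' < η` is contained in
`1 ≤ exp (θ η - θ (1 + ρ) η')`, so by Markov's inequality and independence its probability is at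
most the product of the two gamma Laplace transforms `(1 - θ)^(-k/2) (1 + θ (1 + ρ))^(-(k+1)/2)`.
The choice `θ = ρ / (2 (1 + ρ))` makes `(1 - θ) (1 + ρ/2) = (1 - ρ² / (2 + ρ)²)⁻¹`, and lowering
the second exponent from `(k+1)/2` to `k/2` only increases the bound.
-/

open MeasureTheory ProbabilityTheory Real Set

namespace ProbabilityTheory

lemma measurable_gammaPDF (a r : ℝ) : Measurable (gammaPDF a r) :=
  (measurable_gammaPDFReal a r).ennreal_ofReal

lemma gammaPDF_mul_exp_mul {a r c : ℝ} (hr : 0 ≤ r) (hc : c < r) (x : ℝ) :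
    gammaPDF a r x * ENNReal.ofReal (exp (c * x)) =
      ENNReal.ofReal ((r / (r - c)) ^ a) * gammaPDF a (r - c) x := by
  rcases lt_or_ge x 0 with hx | hx
  · simp [gammaPDF_of_neg hx]
  have hrc : 0 < r - c := sub_pos.mpr hc
  rw [gammaPDF_of_nonneg hx, gammaPDF_of_nonneg hx, ← ENNReal.ofReal_mul' (exp_nonneg _),
    ← ENNReal.ofReal_mul (by positivity)]
  congr 1
  have hexp : exp (-(r * x)) * exp (c * x) = exp (-((r - c) * x)) := by
    rw [← exp_add]; ring_nf
  have hpow : (r / (r - c)) ^ a * (r - c) ^ a = r ^ a := by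
    rw [← mul_rpow (div_nonneg hr hrc.le) hrc.le, div_mul_cancel₀ _ hrc.ne']
  rw [mul_assoc, hexp, ← hpow]
  ring

lemma lintegral_exp_mul_gammaMeasure {a r c : ℝ} (ha : 0 < a) (hr : 0 ≤ r) (hc : c < r) :
    ∫⁻ x, ENNReal.ofReal (exp (c * x)) ∂gammaMeasure a r = ENNReal.ofReal ((r / (r - c)) ^ a) := by
  rw [gammaMeasure, lintegral_withDensity_eq_lintegral_mul _ (measurable_gammaPDF a r)
    (by fun_prop)]
  simp only [Pi.mul_apply, gammaPDF_mul_exp_mul hr hc]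
  rw [lintegral_const_mul _ (measurable_gammaPDF a (r - c)),
    lintegral_gammaPDF_eq_one ha (sub_pos.mpr hc), mul_one]

lemma ae_pos_gammaMeasure (a r : ℝ) : ∀ᵐ x ∂gammaMeasure a r, 0 < x := by
  rw [gammaMeasure, ae_withDensity_iff (measurable_gammaPDF a r)]
  filter_upwards [Measure.ae_ne volume 0] with x hx0 hpdf
  exact lt_of_le_of_ne (not_lt.mp fun hx ↦ hpdf (gammaPDF_of_neg hx)) hx0.symm

lemma measure_mul_lt_le_lintegral_exp_mul {Ω : Type*} [MeasurableSpace Ω] {μ : Measure Ω}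
    {X Y : Ω → ℝ} (hX : Measurable X) (hY : Measurable Y) (hXY : IndepFun X Y μ) {t θ : ℝ}
    (hθ : 0 ≤ θ) :
    μ {ω | t * Y ω < X ω} ≤
      (∫⁻ x, ENNReal.ofReal (exp (θ * x)) ∂μ.map X) *
        ∫⁻ y, ENNReal.ofReal (exp (-(θ * t) * y)) ∂μ.map Y := by
  set f : ℝ → ENNReal := fun x ↦ ENNReal.ofReal (exp (θ * x))
  set g : ℝ → ENNReal := fun y ↦ ENNReal.ofReal (exp (-(θ * t) * y))
  have hf : Measurable f := by fun_prop
  have hg : Measurable g := by fun_prop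
  have hsub : {ω | t * Y ω < X ω} ⊆ {ω | 1 ≤ f (X ω) * g (Y ω)} := fun ω hω ↦ by
    have : 0 ≤ θ * X ω + -(θ * t) * Y ω := by
      linarith [mul_le_mul_of_nonneg_left hω.le hθ]
    simp only [f, g, ← ENNReal.ofReal_mul (exp_nonneg _), ← exp_add]
    exact ENNReal.one_le_ofReal.mpr (one_le_exp this)
  calc μ {ω | t * Y ω < X ω} ≤ μ {ω | 1 ≤ f (X ω) * g (Y ω)} := measure_mono hsub
    _ ≤ ∫⁻ ω, f (X ω) * g (Y ω) ∂μ := by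
      simpa using mul_meas_ge_le_lintegral₀ (by fun_prop) (1 : ENNReal)
    _ = (∫⁻ ω, f (X ω) ∂μ) * ∫⁻ ω, g (Y ω) ∂μ :=
      lintegral_mul_eq_lintegral_mul_lintegral_of_indepFun'' (by fun_prop) (by fun_prop)
        (hXY.comp hf hg)
    _ = _ := by rw [lintegral_map hf hX, lintegral_map hg hY]

end ProbabilityTheory

lemma one_div_rpow_mul_one_div_rpow_le {ρ s s' : ℝ} (hρ : 0 ≤ ρ) (hss' : s ≤ s') :
    (1 / (1 - ρ / (2 * (1 + ρ)))) ^ s * (1 / (1 + ρ / 2)) ^ s' ≤ (1 - ρ ^ 2 / (2 + ρ) ^ 2) ^ s := by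
  have hθ : 0 < 1 - ρ / (2 * (1 + ρ)) := by
    rw [sub_pos, div_lt_one (by positivity)]; linarith
  have hb : 0 < 1 / (1 + ρ / 2) := by positivity
  calc (1 / (1 - ρ / (2 * (1 + ρ)))) ^ s * (1 / (1 + ρ / 2)) ^ s'
      ≤ (1 / (1 - ρ / (2 * (1 + ρ)))) ^ s * (1 / (1 + ρ / 2)) ^ s := by
        refine mul_le_mul_of_nonneg_left ?_ (by positivity)
        exact rpow_le_rpow_of_exponent_ge hb (by rw [div_le_one (by positivity)]; linarith) hss'
    _ = (1 / (1 - ρ / (2 * (1 + ρ))) * (1 / (1 + ρ / 2))) ^ s :=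
        (mul_rpow (by positivity) hb.le).symm
    _ = (1 - ρ ^ 2 / (2 + ρ) ^ 2) ^ s := by
        have h1 : 1 - ρ / (2 * (1 + ρ)) = (2 + ρ) / (2 * (1 + ρ)) := by field_simp; ring
        have h2 : 1 + ρ / 2 = (2 + ρ) / 2 := by ring
        rw [h1, h2]
        congr 1
        field_simp
        ring

theorem ratio_upper_deviation_general {Ω : Type*} [MeasurableSpace Ω] (μ : Measure Ω)
    (k : ℕ) (hk : 1 ≤ k) (ρ : ℝ) (hρ : ρ ∈ Set.Icc (0 : ℝ) 1)
    (η η' : Ω → ℝ) (hηm : Measurable η) (hη'm : Measurable η')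
    (hηlaw : μ.map η = gammaMeasure ((k : ℝ) / 2) 1)
    (hη'law : μ.map η' = gammaMeasure (((k : ℝ) + 1) / 2) 1)
    (hindep : IndepFun η η' μ) :
    μ {ω | 1 + ρ < η ω / η' ω} ≤
      ENNReal.ofReal ((1 - ρ ^ 2 / (2 + ρ) ^ 2) ^ ((k : ℝ) / 2)) := by
  have hρ0 : 0 ≤ ρ := hρ.1
  have hk0 : (0 : ℝ) < k / 2 := by have : (1 : ℝ) ≤ k := mod_cast hk; linarith
  have hθρ : ρ / (2 * (1 + ρ)) * (1 + ρ) = ρ / 2 := by field_simp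
  set θ := ρ / (2 * (1 + ρ))
  have hθ1 : θ < 1 := by rw [div_lt_one (by positivity)]; linarith
  have hη'pos : ∀ᵐ ω ∂μ, 0 < η' ω :=
    ae_of_ae_map hη'm.aemeasurable (hη'law ▸ ae_pos_gammaMeasure _ _)
  calc μ {ω | 1 + ρ < η ω / η' ω} ≤ μ {ω | (1 + ρ) * η' ω < η ω} :=
        measure_mono_ae (by filter_upwards [hη'pos] with ω hω h using (lt_div_iff₀ hω).mp h)
    _ ≤ (∫⁻ x, ENNReal.ofReal (exp (θ * x)) ∂μ.map η) *
          ∫⁻ y, ENNReal.ofReal (exp (-(θ * (1 + ρ)) * y)) ∂μ.map η' :=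
        measure_mul_lt_le_lintegral_exp_mul hηm hη'm hindep (by positivity)
    _ = ENNReal.ofReal ((1 / (1 - θ)) ^ ((k : ℝ) / 2) *
          (1 / (1 + ρ / 2)) ^ (((k : ℝ) + 1) / 2)) := by
        rw [hηlaw, hη'law, hθρ, lintegral_exp_mul_gammaMeasure hk0 zero_le_one hθ1,
          lintegral_exp_mul_gammaMeasure (by positivity) zero_le_one (by linarith),
          sub_neg_eq_add, ENNReal.ofReal_mul (by positivity)]
    _ ≤ ENNReal.ofReal ((1 - ρ ^ 2 / (2 + ρ) ^ 2) ^ ((k : ℝ) / 2)) :=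
        ENNReal.ofReal_le_ofReal (one_div_rpow_mul_one_div_rpow_le hρ0 (by linarith))

theorem ratio_upper_deviation {Ω : Type*} [MeasurableSpace Ω] (μ : Measure Ω)
    [IsProbabilityMeasure μ] (k : ℕ) (hk : 1 ≤ k) (ρ : ℝ) (hρ : ρ ∈ Set.Icc (0 : ℝ) 1)
    (η η' : Ω → ℝ) (hηm : Measurable η) (hη'm : Measurable η')
    (hηlaw : μ.map η = gammaMeasure ((k : ℝ) / 2) 1)
    (hη'law : μ.map η' = gammaMeasure (((k : ℝ) + 1) / 2) 1)
    (hindep : IndepFun η η' μ) :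
    μ {ω | 1 + ρ < η ω / η' ω} ≤
      ENNReal.ofReal ((1 - ρ ^ 2 / (2 + ρ) ^ 2) ^ ((k : ℝ) / 2)) :=
  ratio_upper_deviation_general μ k hk ρ hρ η η' hηm hη'm hηlaw hη'law hindep
end
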